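/- arXiv:1108.0953 — 2 statements merged into one kernel-verified Lean document; each statement's English description precedes it below -/
import Mathlib

section
/- For every p ∈ ℕ, ε(p,p) = μ^{β(p)} · (-1)^{β(p)(β(p)-1)/2}, where β(p) is the popcount of p. In particular, the square of every basis multi-vector i_p is ±1. -/
/-- Number of 1-bits (popcount) of a natural number. -/
def popCount : ℕ → ℕ
  | 0 => 0
  | (n+1) => (n+1) % 2 + popCount ((n+1) / 2)
decreasing_by omega

/-- The Clifford twist with parameter `μ`. -/
def cliffordTwist (μ : ℤ) (p q : ℕ) : ℤ :=
  if p = 0 ∧ q = 0 then 1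
  else
    (if q % 2 = 1 then
      (if p % 2 = 1 then μ else 1) * (-1) ^ popCount (p / 2)
     else 1) * cliffordTwist μ (p / 2) (q / 2)
termination_by p + q
decreasing_by omega

/-! Writing `p = 2p' + b`, the recursion gives `ε(p,p) = (μ (-1)^β(p'))^b ε(p',p')` and
`β(p) = β(p') + b`; the induction closes by Pascal's rule `C(β+1, 2) = β + C(β, 2)`, as
`β(β-1)/2 = C(β, 2)`. -/

theorem popCount_eq_mod_two_add (p : ℕ) : popCount p = p % 2 + popCount (p / 2) := by
  cases p with
  | zero => simp [popCount]
  | succ n => rw [popCount]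

theorem cliffordTwist_self_of_ne_zero (μ : ℤ) {p : ℕ} (hp : p ≠ 0) :
    cliffordTwist μ p p =
      (if p % 2 = 1 then μ * (-1) ^ popCount (p / 2) else 1) * cliffordTwist μ (p / 2) (p / 2) := by
  rw [cliffordTwist, if_neg (fun h => hp h.1)]
  split_ifs <;> simp

theorem succ_mul_div_two_eq_add (b : ℕ) : (b + 1) * (b + 1 - 1) / 2 = b + b * (b - 1) / 2 := by
  rw [← Nat.choose_two_right, ← Nat.choose_two_right, Nat.choose_succ_succ', Nat.choose_one_right]

theorem cliffordTwist_self (μ : ℤ) (p : ℕ) :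
    cliffordTwist μ p p = μ ^ popCount p * (-1) ^ (popCount p * (popCount p - 1) / 2) := by
  induction p using Nat.strong_induction_on with
  | _ p ih =>
  rcases eq_or_ne p 0 with rfl | hp
  · simp [cliffordTwist, popCount]
  rw [cliffordTwist_self_of_ne_zero μ hp, ih (p / 2) (Nat.div_lt_self (Nat.pos_of_ne_zero hp) one_lt_two),
    popCount_eq_mod_two_add p]
  rcases Nat.mod_two_eq_zero_or_one p with h | h
  · simp [h]
  · rw [h, if_pos rfl, add_comm 1, succ_mul_div_two_eq_add, pow_succ', pow_add]
    ring

theorem stmt6 (μ : ℤ) (hμ : μ = 1 ∨ μ = -1) (p : ℕ) :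
    cliffordTwist μ p p = μ ^ popCount p * (-1) ^ (popCount p * (popCount p - 1) / 2) ∧
    (cliffordTwist μ p p = 1 ∨ cliffordTwist μ p p = -1) := by
  refine ⟨cliffordTwist_self μ p, Int.isUnit_iff.mp ?_⟩
  rw [cliffordTwist_self]
  exact ((Int.isUnit_iff.mpr hμ).pow _).mul (isUnit_neg_one.pow _)
end

section
/- For all q ∈ ℕ and k ∈ ℕ, ε(2^k, q) = (-1)^{β(q mod 2^k)} · μ^{b}, where β is popcount and b = 1 if bit k of q is set and b = 0 otherwise; that is, multiplying a blade on the left by the 1-blade e_{k+1} introduces a sign of -1 for each lower-indexed vector factor of the blade, and a factor μ if e_{k+1} is itself a factor. -/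
/-!
Peeling off the lowest bit of `q`: the recursion for `ε(2^(k+1), q)` contributes a sign
`(-1)^β(2^k) = -1` exactly when `q` is odd and passes to `ε(2^k, q / 2)`. This matches
`β(q mod 2^(k+1)) = (q mod 2) + β((q / 2) mod 2^k)` and `testBit q (k+1) = testBit (q / 2) k`,
so induction on `k` reduces everything to `ε(1, q) = μ^(q mod 2)`.
-/

lemma popCount_eq_mod_two_add_div_two (n : ℕ) : popCount n = n % 2 + popCount (n / 2) := by
  cases n with
  | zero => norm_num [popCount]
  | succ m => rw [popCount]

lemma popCount_two_pow (k : ℕ) : popCount (2 ^ k) = 1 := by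
  induction k with
  | zero => norm_num [popCount]
  | succ k ih =>
    rw [popCount_eq_mod_two_add_div_two, pow_succ', Nat.mul_mod_right,
      Nat.mul_div_cancel_left _ two_pos, ih]

lemma popCount_mod_two_pow_succ (q k : ℕ) :
    popCount (q % 2 ^ (k + 1)) = q % 2 + popCount (q / 2 % 2 ^ k) := by
  rw [popCount_eq_mod_two_add_div_two, Nat.mod_mod_of_dvd q (dvd_pow_self 2 k.succ_ne_zero),
    pow_succ', Nat.mod_mul_right_div_self]

lemma cliffordTwist_zero_left (μ : ℤ) (q : ℕ) : cliffordTwist μ 0 q = 1 := by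
  induction q using Nat.strong_induction_on with
  | _ q ih =>
    rw [cliffordTwist]
    rcases Nat.eq_zero_or_pos q with rfl | hq
    · simp
    · simp [hq.ne', ih (q / 2) (Nat.div_lt_self hq one_lt_two), popCount]

lemma cliffordTwist_one_left (μ : ℤ) (q : ℕ) :
    cliffordTwist μ 1 q = if q % 2 = 1 then μ else 1 := by
  rw [cliffordTwist, if_neg (by omega)]
  simp [popCount, cliffordTwist_zero_left]

lemma cliffordTwist_two_mul_left (μ : ℤ) {p : ℕ} (hp : p ≠ 0) (q : ℕ) :
    cliffordTwist μ (2 * p) q =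
      (if q % 2 = 1 then (-1) ^ popCount p else 1) * cliffordTwist μ p (q / 2) := by
  rw [cliffordTwist, if_neg (by omega), Nat.mul_mod_right, Nat.mul_div_cancel_left _ two_pos]
  simp

theorem stmt18_general (μ : ℤ) (k q : ℕ) :
    cliffordTwist μ (2^k) q =
      (-1) ^ popCount (q % 2^k) * μ ^ (if q.testBit k then 1 else 0) := by
  induction k generalizing q with
  | zero =>
    rw [pow_zero, cliffordTwist_one_left, Nat.mod_one, Nat.testBit_zero]
    rcases Nat.mod_two_eq_zero_or_one q with h | h <;> simp [h, popCount]
  | succ k ih =>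
    rw [popCount_mod_two_pow_succ, Nat.testBit_add_one, pow_succ',
      cliffordTwist_two_mul_left μ (pow_ne_zero k two_ne_zero), ih, popCount_two_pow]
    rcases Nat.mod_two_eq_zero_or_one q with h | h <;> simp [h, pow_add]

theorem stmt18 (μ : ℤ) (hμ : μ = 1 ∨ μ = -1) (k q : ℕ) :
    cliffordTwist μ (2^k) q =
      (-1) ^ popCount (q % 2^k) * μ ^ (if q.testBit k then 1 else 0) :=
  stmt18_general μ k q
end
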